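/- arXiv:2602.07841 — 3 statements merged into one kernel-verified Lean document; each statement's English description precedes it below -/
import Mathlib

section
/- Let (Ω, F, P) be a probability space and G ⊆ F a sub-σ-algebra. Let D be a G-measurable random variable with values in {−1, 1}, σ a G-measurable nonnegative integrable random variable, z a random variable with |z| integrable and satisfying E[|z| | G] = E[|z|] almost surely, and I a random variable with values in {0, 1} such that E[I | G] = p almost surely for a constant p ∈ [1/2, 1] and such that I is conditionally independent of σ·|z| given G. Assume σ·|z| and D·(2I−1)·σ·|z| are integrable. Then the MSE-optimal point forecast μ := E[D·(2I−1)·σ·|z| | G] satisfies μ = D · (2p − 1) · σ · E[|z|] almost surely. -/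
open MeasureTheory ProbabilityTheory

/-- Under the decomposition of the realized return into forecast sign `D`,
directional correctness factor `2I - 1`, conditional volatility `σ` and innovation
magnitude `|z|`, with `E[|z| | m] = E[|z|]` a.s., `E[I | m] = p` a.s. for a constant
`p ∈ [1/2, 1]`, and `I` conditionally independent of `σ·|z|` given `m`, the MSE-optimal
point forecast `μ = E[D·(2I-1)·σ·|z| | m]` satisfies `μ = D·(2p-1)·σ·E[|z|]` a.s. -/
theorem optimal_forecast_decomposition
    {Ω : Type*} (m : MeasurableSpace Ω) {mΩ : MeasurableSpace Ω} [StandardBorelSpace Ω] [Nonempty Ω]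
    {P : Measure Ω} [IsProbabilityMeasure P]
    (hm : m ≤ mΩ)
    (D σ z I : Ω → ℝ)
    (hDmeas : Measurable[m] D) (hDval : ∀ ω, D ω = -1 ∨ D ω = 1)
    (hσmeas : Measurable[m] σ) (hσnonneg : ∀ ω, 0 ≤ σ ω)
    (hσint : Integrable σ P)
    (hzmeas : Measurable z)
    (hzint : Integrable (fun ω => |z ω|) P)
    (hzcond : P[fun ω => |z ω| | m] =ᵐ[P] fun _ => ∫ ω, |z ω| ∂P)
    (hImeas : Measurable I) (hIval : ∀ ω, I ω = 0 ∨ I ω = 1)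
    (p : ℝ) (hp : p ∈ Set.Icc (1/2 : ℝ) 1)
    (hpcond : P[I | m] =ᵐ[P] fun _ => p)
    (hindep : CondIndepFun m hm I (fun ω => σ ω * |z ω|) P)
    (hint1 : Integrable (fun ω => σ ω * |z ω|) P)
    (hint2 : Integrable (fun ω => D ω * (2 * I ω - 1) * σ ω * |z ω|) P) :
    P[fun ω => D ω * (2 * I ω - 1) * σ ω * |z ω| | m]
      =ᵐ[P] fun ω => D ω * (2 * p - 1) * σ ω * (∫ ω', |z ω'| ∂P) := by
  letI : MeasurableSpace Ω := mΩ
  have hp0 : (0:ℝ) ≤ p := le_trans (by norm_num) hp.1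
  set c : ℝ := ∫ ω', |z ω'| ∂P with hc
  set X : Ω → ℝ := fun ω => σ ω * |z ω| with hXdef
  have hσmeas0 : Measurable[mΩ] σ := fun _ ht => hm _ (hσmeas ht)
  have hImeas0 : Measurable[mΩ] I := hImeas
  have hzmeas0 : Measurable[mΩ] z := hzmeas
  have hXmeas : Measurable[mΩ] X := hσmeas0.mul hzmeas0.abs
  set A : Set Ω := I ⁻¹' {1} with hAdef
  have hAmeas : MeasurableSet[mΩ] A := hImeas0 (measurableSet_singleton 1)
  have hI_ind : ∀ ω, I ω = A.indicator (fun _ => (1:ℝ)) ω := by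
    intro ω
    rcases hIval ω with h | h <;>
      simp [hAdef, Set.indicator_apply, Set.mem_preimage, h]
  have hIbd : ∀ ω, ‖I ω‖ ≤ 1 := by
    intro ω; rcases hIval ω with h | h <;> simp [h]
  have hIXint : Integrable (fun ω => I ω * X ω) P :=
    hint1.bdd_mul (c := 1) hImeas0.aestronglyMeasurable (ae_of_all _ hIbd)
  have hσsm : StronglyMeasurable[m] σ := hσmeas.stronglyMeasurable
  -- Claim A : E[X | m] = σ * c
  have hXcond : P[X | m] =ᵐ[P] fun ω => σ ω * c := by
    have h1 : P[X | m] =ᵐ[P] σ * P[fun ω => |z ω| | m] :=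
      condExp_mul_of_stronglyMeasurable_left hσsm hint1 hzint
    filter_upwards [h1, hzcond] with ω hω hz
    rw [hω, Pi.mul_apply, hz]
  -- key set-integral identity
  have hBset : ∀ s : Set Ω, MeasurableSet[m] s →
      ∫ ω in s, I ω * X ω ∂P = p * ∫ ω in s, X ω ∂P := by
    intro s hs
    have hs0 : MeasurableSet[mΩ] s := hm s hs
    -- measure identity from conditional independence
    have hmeas_eq : ∀ t : Set ℝ, MeasurableSet t →
        P (X ⁻¹' t ∩ (s ∩ A)) = ENNReal.ofReal p * P (X ⁻¹' t ∩ s) := by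
      intro t ht
      have hprod := (condIndepFun_iff_condExp_inter_preimage_eq_mul hImeas0 hXmeas).mp
        hindep {1} t (measurableSet_singleton 1) ht
      have hAp : (P⟦A | m⟧) =ᵐ[P] fun _ => p := by
        have hAI : A.indicator (fun _ => (1:ℝ)) = I := funext fun ω => (hI_ind ω).symm
        calc (P⟦A | m⟧) = P[I | m] := by rw [hAI]
          _ =ᵐ[P] fun _ => p := hpcond
      have hint_ind : ∀ u : Set Ω, MeasurableSet[mΩ] u →
          Integrable (u.indicator (fun _ => (1:ℝ))) P :=
        fun u hu => (integrable_const (1:ℝ)).indicator hu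
      have hset_ind : ∀ u : Set Ω, MeasurableSet[mΩ] u →
          ∫ ω in s, u.indicator (fun _ => (1:ℝ)) ω ∂P = (P (s ∩ u)).toReal := by
        intro u hu
        rw [setIntegral_indicator hu, setIntegral_const, smul_eq_mul, mul_one, measureReal_def]
      -- integrate the product identity over s
      have hL : ∫ ω in s, (P⟦A ∩ X ⁻¹' t | m⟧) ω ∂P = (P (s ∩ (A ∩ X ⁻¹' t))).toReal := by
        rw [setIntegral_condExp hm (hint_ind _ (hAmeas.inter (hXmeas ht))) hs]
        exact hset_ind _ (hAmeas.inter (hXmeas ht))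
      have hR : ∫ ω in s, ((P⟦A | m⟧) ω * (P⟦X ⁻¹' t | m⟧) ω) ∂P
          = p * (P (s ∩ X ⁻¹' t)).toReal := by
        have h1 : ∫ ω in s, ((P⟦A | m⟧) ω * (P⟦X ⁻¹' t | m⟧) ω) ∂P
            = ∫ ω in s, p * (P⟦X ⁻¹' t | m⟧) ω ∂P := by
          refine setIntegral_congr_ae hs0 ?_
          filter_upwards [hAp] with ω hω _
          rw [hω]
        rw [h1, integral_const_mul, setIntegral_condExp hm (hint_ind _ (hXmeas ht)) hs,
          hset_ind _ (hXmeas ht)]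
      have heq : (P (s ∩ (A ∩ X ⁻¹' t))).toReal = p * (P (s ∩ X ⁻¹' t)).toReal := by
        rw [← hL, ← hR]
        exact setIntegral_congr_ae hs0 (hprod.mono fun ω hω _ => hω)
      have hfin1 : P (s ∩ (A ∩ X ⁻¹' t)) ≠ ⊤ := measure_ne_top _ _
      have hfin2 : P (s ∩ X ⁻¹' t) ≠ ⊤ := measure_ne_top _ _
      have : P (s ∩ (A ∩ X ⁻¹' t)) = ENNReal.ofReal p * P (s ∩ X ⁻¹' t) := by
        rw [← ENNReal.ofReal_toReal hfin1, heq, ENNReal.ofReal_mul hp0,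
          ENNReal.ofReal_toReal hfin2]
      calc P (X ⁻¹' t ∩ (s ∩ A)) = P (s ∩ (A ∩ X ⁻¹' t)) := by
            rw [Set.inter_comm, Set.inter_assoc, Set.inter_comm A (X ⁻¹' t),
              ← Set.inter_assoc, Set.inter_comm s (X ⁻¹' t), Set.inter_assoc]
        _ = ENNReal.ofReal p * P (s ∩ X ⁻¹' t) := this
        _ = ENNReal.ofReal p * P (X ⁻¹' t ∩ s) := by rw [Set.inter_comm]
    -- pushforward measures identity
    have hmap : Measure.map X (P.restrict (s ∩ A))
        = ENNReal.ofReal p • Measure.map X (P.restrict s) := by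
      ext t ht
      rw [Measure.map_apply hXmeas ht, Measure.smul_apply,
        Measure.map_apply hXmeas ht, Measure.restrict_apply (hXmeas ht),
        Measure.restrict_apply (hXmeas ht), smul_eq_mul]
      exact hmeas_eq t ht
    have h3 : (fun ω => I ω * X ω) = A.indicator X := by
      funext ω
      rcases hIval ω with h | h <;>
        simp [hAdef, Set.indicator_apply, Set.mem_preimage, h]
    calc ∫ ω in s, I ω * X ω ∂P = ∫ ω in s, A.indicator X ω ∂P := by rw [h3]
      _ = ∫ ω in s ∩ A, X ω ∂P := setIntegral_indicator hAmeas
      _ = ∫ x, x ∂(Measure.map X (P.restrict (s ∩ A))) :=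
          (integral_map hXmeas.aemeasurable measurable_id.aestronglyMeasurable).symm
      _ = ∫ x, x ∂(ENNReal.ofReal p • Measure.map X (P.restrict s)) := by rw [hmap]
      _ = (ENNReal.ofReal p).toReal • ∫ x, x ∂(Measure.map X (P.restrict s)) :=
          integral_smul_measure _ _
      _ = p * ∫ ω in s, X ω ∂P := by
          rw [ENNReal.toReal_ofReal hp0, smul_eq_mul]
          congr 1
          exact integral_map hXmeas.aemeasurable measurable_id.aestronglyMeasurable
  -- Claim B : E[I * X | m] = p * σ * c
  have hIXcond : P[fun ω => I ω * X ω | m] =ᵐ[P] fun ω => p * (σ ω * c) := by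
    refine (ae_eq_condExp_of_forall_setIntegral_eq hm hIXint
      (fun s hs hfin => ((hσint.mul_const c).const_mul p).integrableOn)
      (fun s hs hfin => ?_) ?_).symm
    · rw [hBset s hs]
      have hXs : ∫ ω in s, X ω ∂P = ∫ ω in s, σ ω * c ∂P := by
        rw [← setIntegral_condExp hm hint1 hs]
        exact setIntegral_congr_ae (hm s hs) (hXcond.mono fun ω hω _ => hω)
      rw [integral_const_mul, hXs]
    · exact (StronglyMeasurable.aestronglyMeasurable
        (((hσsm.mul_const c).const_mul p)))
  -- final assembly
  have hDsm : StronglyMeasurable[m] D := hDmeas.stronglyMeasurable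
  set h : Ω → ℝ := fun ω => 2 * (I ω * X ω) - X ω with hhdef
  have hhint : Integrable h P := (hIXint.const_mul 2).sub hint1
  have hfh : (fun ω => D ω * (2 * I ω - 1) * σ ω * |z ω|) = D * h := by
    funext ω
    simp only [Pi.mul_apply, hhdef, hXdef]
    ring
  have hDh_int : Integrable (D * h) P := by rw [← hfh]; exact hint2
  have h1 : P[D * h | m] =ᵐ[P] D * P[h | m] :=
    condExp_mul_of_stronglyMeasurable_left hDsm hDh_int hhint
  have e1 : P[h | m] =ᵐ[P] P[fun ω => 2 * (I ω * X ω) | m] - P[X | m] :=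
    condExp_sub (hIXint.const_mul 2) hint1 _
  have e2 : P[fun ω => 2 * (I ω * X ω) | m] =ᵐ[P] (2:ℝ) • P[fun ω => I ω * X ω | m] :=
    condExp_smul (2:ℝ) _ _
  have h2 : P[h | m] =ᵐ[P] fun ω => (2 * p - 1) * (σ ω * c) := by
    filter_upwards [e1, e2, hIXcond, hXcond] with ω he1 he2 hIX hX
    rw [he1, Pi.sub_apply, he2, Pi.smul_apply, smul_eq_mul, hIX, hX]
    ring
  rw [hfh]
  filter_upwards [h1, h2] with ω h1ω h2ω
  rw [h1ω, Pi.mul_apply, h2ω]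
  ring
end

section
/- Let (Ω, F, P) be a probability space and G ⊆ F a sub-σ-algebra. Let D be a G-measurable random variable with values in {−1, 1}, σ a G-measurable nonnegative square-integrable random variable, z a random variable with |z| integrable and E[|z| | G] = E[|z|] almost surely, and I a random variable with values in {0, 1} such that E[I | G] = p almost surely for a constant p ∈ [1/2, 1] and such that I is conditionally independent of σ·|z| given G. Assume σ·|z| and D·(2I−1)·σ·|z| are integrable, and let μ := E[D·(2I−1)·σ·|z| | G]. Then the expected squared forecast satisfies E[μ²] = (2p − 1)² · (E[|z|])² · E[σ²]. -/
open MeasureTheory ProbabilityTheory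

/-- Auxiliary: if `I` is `{0,1}`-valued with `P[I|m] =ᵐ p` and is conditionally independent of
an integrable `Y` given `m`, then `P[I·Y|m] =ᵐ p · P[Y|m]`. -/
lemma aux_condexp_mul_indicator
    {Ω : Type*} (m : MeasurableSpace Ω) {mΩ : MeasurableSpace Ω}
    [StandardBorelSpace Ω] [Nonempty Ω]
    {P : Measure Ω} [IsProbabilityMeasure P]
    (hm : m ≤ mΩ)
    (I Y : Ω → ℝ) (hImeas : Measurable[mΩ] I) (hIval : ∀ ω, I ω = 0 ∨ I ω = 1)
    (hYmeas : Measurable[mΩ] Y) (hYint : Integrable Y P)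
    (p : ℝ) (hp0 : 0 ≤ p)
    (hpcond : P[I | m] =ᵐ[P] fun _ => p)
    (hindep : CondIndepFun m hm I Y P) :
    P[fun ω => I ω * Y ω | m] =ᵐ[P] fun ω => p * (P[Y | m]) ω := by
  set A : Set Ω := I ⁻¹' {1} with hA_def
  have hA : MeasurableSet A := hImeas (measurableSet_singleton 1)
  have hI_ind : (Set.indicator A fun _ => (1 : ℝ)) = I := by
    funext ω
    rcases hIval ω with h | h
    · simp [Set.indicator, hA_def, h]
    · simp [Set.indicator, hA_def, h]
  -- conditional independence applied to A and Y⁻¹' t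
  have hkey := (condIndepFun_iff_condExp_inter_preimage_eq_mul (μ := P) (hm' := hm)
    hImeas hYmeas).mp hindep
  have hpA : (P⟦A | m⟧) =ᵐ[P] fun _ => p := by
    rw [hI_ind]; exact hpcond
  -- set-level identity
  have hset : ∀ s : Set Ω, MeasurableSet[m] s → ∀ t : Set ℝ, MeasurableSet t →
      P (s ∩ (A ∩ Y ⁻¹' t)) = ENNReal.ofReal p * P (s ∩ Y ⁻¹' t) := by
    intro s hs t ht
    have hs' : MeasurableSet s := hm s hs
    have hAT : MeasurableSet (A ∩ Y ⁻¹' t) := hA.inter (hYmeas ht)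
    have hT : MeasurableSet (Y ⁻¹' t) := hYmeas ht
    have h1 : ∫ ω in s, (P⟦A ∩ Y ⁻¹' t | m⟧) ω ∂P
        = ∫ ω in s, (fun ω => (P⟦A | m⟧) ω * (P⟦Y ⁻¹' t | m⟧) ω) ω ∂P :=
      setIntegral_congr_ae hs' ((hkey {1} t (measurableSet_singleton 1) ht).mono
        fun ω h _ => h)
    have hindAT : Integrable (Set.indicator (A ∩ Y ⁻¹' t) fun _ => (1 : ℝ)) P :=
      (integrable_const (1 : ℝ)).indicator hAT
    have hindT : Integrable (Set.indicator (Y ⁻¹' t) fun _ => (1 : ℝ)) P :=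
      (integrable_const (1 : ℝ)).indicator hT
    have hL : ∫ ω in s, (P⟦A ∩ Y ⁻¹' t | m⟧) ω ∂P = (P (s ∩ (A ∩ Y ⁻¹' t))).toReal := by
      rw [setIntegral_condExp hm hindAT hs, setIntegral_indicator hAT]
      simp [Measure.restrict_apply' (hAT.inter hs'), Measure.real_def]
    have hR : ∫ ω in s, (fun ω => (P⟦A | m⟧) ω * (P⟦Y ⁻¹' t | m⟧) ω) ω ∂P
        = p * (P (s ∩ Y ⁻¹' t)).toReal := by
      have : ∫ ω in s, (fun ω => (P⟦A | m⟧) ω * (P⟦Y ⁻¹' t | m⟧) ω) ω ∂P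
          = ∫ ω in s, p * (P⟦Y ⁻¹' t | m⟧) ω ∂P :=
        setIntegral_congr_ae hs' (hpA.mono fun ω h _ => by simp [h])
      rw [this, integral_const_mul, setIntegral_condExp hm hindT hs,
        setIntegral_indicator hT]
      simp [Measure.restrict_apply' (hT.inter hs'), Measure.real_def]
    have htoReal : (P (s ∩ (A ∩ Y ⁻¹' t))).toReal = p * (P (s ∩ Y ⁻¹' t)).toReal := by
      rw [← hL, h1, hR]
    have hne1 : P (s ∩ (A ∩ Y ⁻¹' t)) ≠ ⊤ := measure_ne_top _ _
    have hne2 : ENNReal.ofReal p * P (s ∩ Y ⁻¹' t) ≠ ⊤ :=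
      ENNReal.mul_ne_top ENNReal.ofReal_ne_top (measure_ne_top _ _)
    rw [← ENNReal.toReal_eq_toReal_iff' hne1 hne2, htoReal, ENNReal.toReal_mul,
      ENNReal.toReal_ofReal hp0]
  -- set integral identity for I * Y
  have key : ∀ s : Set Ω, MeasurableSet[m] s →
      ∫ ω in s, I ω * Y ω ∂P = p * ∫ ω in s, Y ω ∂P := by
    intro s hs
    have hs' : MeasurableSet s := hm s hs
    have hIY_eq : ∀ ω, I ω * Y ω = Set.indicator A Y ω := by
      intro ω
      rcases hIval ω with h | h
      · have hωA : ω ∉ A := by simp [hA_def, h]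
        simp [Set.indicator, hωA, h]
      · have hωA : ω ∈ A := by simp [hA_def, h]
        simp [Set.indicator, hωA, h]
    have h1 : ∫ ω in s, I ω * Y ω ∂P = ∫ ω in s ∩ A, Y ω ∂P := by
      rw [show (fun ω => I ω * Y ω) = Set.indicator A Y from funext hIY_eq]
      exact setIntegral_indicator hA
    have hmap : Measure.map Y (P.restrict (s ∩ A))
        = (ENNReal.ofReal p) • Measure.map Y (P.restrict s) := by
      ext t ht
      rw [Measure.map_apply hYmeas ht, Measure.smul_apply,
        Measure.map_apply hYmeas ht, Measure.restrict_apply (hYmeas ht),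
        Measure.restrict_apply (hYmeas ht), smul_eq_mul]
      have e1 : Y ⁻¹' t ∩ (s ∩ A) = s ∩ (A ∩ Y ⁻¹' t) := by ext ω; simp; tauto
      have e2 : Y ⁻¹' t ∩ s = s ∩ Y ⁻¹' t := Set.inter_comm _ _
      rw [e1, e2, hset s hs t ht]
    have h2 : ∫ ω in s ∩ A, Y ω ∂P = ∫ x, x ∂(Measure.map Y (P.restrict (s ∩ A))) :=
      (integral_map hYmeas.aemeasurable aestronglyMeasurable_id).symm
    have h3 : ∫ x, x ∂((ENNReal.ofReal p) • Measure.map Y (P.restrict s))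
        = p * ∫ ω in s, Y ω ∂P := by
      rw [integral_smul_measure]
      have h4 : ∫ x : ℝ, x ∂(Measure.map Y (P.restrict s)) = ∫ ω in s, Y ω ∂P :=
        integral_map hYmeas.aemeasurable aestronglyMeasurable_id
      rw [h4, ENNReal.toReal_ofReal hp0, smul_eq_mul]
    rw [h1, h2, hmap, h3]
  -- I * Y is integrable
  have hIYint : Integrable (fun ω => I ω * Y ω) P := by
    refine Integrable.mono hYint ((hImeas.mul hYmeas).aestronglyMeasurable)
      (Filter.Eventually.of_forall fun ω => ?_)
    rcases hIval ω with h | h <;> simp [h, Real.norm_eq_abs]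
  refine (ae_eq_condExp_of_forall_setIntegral_eq hm hIYint
    (fun s _ _ => (integrable_condExp.const_mul p).integrableOn)
    (fun s hs _ => ?_)
    ((stronglyMeasurable_condExp.const_mul p).aestronglyMeasurable)).symm
  rw [integral_const_mul, setIntegral_condExp hm hYint hs, key s hs]

/-- Under the assumptions of the forecast decomposition, the expected
squared MSE-optimal forecast `μ = E[D·(2I-1)·σ·|z| | m]` satisfies
`E[μ²] = (2p - 1)² · (E[|z|])² · E[σ²]`. -/
theorem expected_squared_forecast
    {Ω : Type*} (m : MeasurableSpace Ω) {mΩ : MeasurableSpace Ω} [StandardBorelSpace Ω] [Nonempty Ω]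
    {P : Measure Ω} [IsProbabilityMeasure P]
    (hm : m ≤ mΩ)
    (D σ z I : Ω → ℝ)
    (hDmeas : Measurable[m] D) (hDval : ∀ ω, D ω = -1 ∨ D ω = 1)
    (hσmeas : Measurable[m] σ) (hσnonneg : ∀ ω, 0 ≤ σ ω)
    (hσL2 : MemLp σ 2 P)
    (hzmeas : Measurable z)
    (hzint : Integrable (fun ω => |z ω|) P)
    (hzcond : P[fun ω => |z ω| | m] =ᵐ[P] fun _ => ∫ ω, |z ω| ∂P)
    (hImeas : Measurable I) (hIval : ∀ ω, I ω = 0 ∨ I ω = 1)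
    (p : ℝ) (hp : p ∈ Set.Icc (1/2 : ℝ) 1)
    (hpcond : P[I | m] =ᵐ[P] fun _ => p)
    (hindep : CondIndepFun m hm I (fun ω => σ ω * |z ω|) P)
    (hint1 : Integrable (fun ω => σ ω * |z ω|) P)
    (hint2 : Integrable (fun ω => D ω * (2 * I ω - 1) * σ ω * |z ω|) P) :
    ∫ ω, ((P[fun ω' => D ω' * (2 * I ω' - 1) * σ ω' * |z ω'| | m]) ω) ^ 2 ∂P
      = (2 * p - 1) ^ 2 * (∫ ω, |z ω| ∂P) ^ 2 * ∫ ω, (σ ω) ^ 2 ∂P := by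
  set c : ℝ := ∫ ω, |z ω| ∂P with hc
  set Y : Ω → ℝ := fun ω => σ ω * |z ω| with hY
  have hσmeas' : Measurable[mΩ] σ := hσmeas.mono hm le_rfl
  have hzmeas' : Measurable[mΩ] z := hzmeas
  have hImeas' : Measurable[mΩ] I := hImeas
  have hYm : Measurable[mΩ] Y := hσmeas'.mul hzmeas.abs
  have hYmeas : Measurable[mΩ] Y := hYm
  have hp0 : (0 : ℝ) ≤ p := le_trans (by norm_num) hp.1
  -- conditional expectation of I * Y
  have hIYcond : P[fun ω => I ω * Y ω | m] =ᵐ[P] fun ω => p * (P[Y | m]) ω :=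
    aux_condexp_mul_indicator m hm I Y hImeas' hIval hYmeas hint1 p hp0 hpcond hindep
  -- conditional expectation of Y
  have hYcond : P[Y | m] =ᵐ[P] fun ω => σ ω * c := by
    have hσsm : StronglyMeasurable[m] σ := hσmeas.stronglyMeasurable
    have h1 : P[Y | m] =ᵐ[P] σ * P[fun ω => |z ω| | m] :=
      condExp_mul_of_stronglyMeasurable_left hσsm hint1 hzint
    refine h1.trans (hzcond.mono fun ω h => ?_)
    simp only [Pi.mul_apply, h]
  -- integrability of I * Y
  have hIYint : Integrable (fun ω => I ω * Y ω) P := by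
    have hms : @AEStronglyMeasurable Ω ℝ _ mΩ mΩ (fun ω => I ω * Y ω) P :=
      (hImeas'.mul hYmeas).aestronglyMeasurable
    refine Integrable.mono hint1 hms
      (Filter.Eventually.of_forall fun ω => ?_)
    rcases hIval ω with h | h <;> simp [hY, h, Real.norm_eq_abs] <;> positivity
  -- the inner factor g
  set g : Ω → ℝ := fun ω => (2 * I ω - 1) * Y ω with hg
  have hgm : Measurable[mΩ] g := ((measurable_const.mul hImeas).sub measurable_const).mul hYm
  have hgmeas : Measurable[mΩ] g := hgm
  have hgint : Integrable g P := by
    have hms : @AEStronglyMeasurable Ω ℝ _ mΩ mΩ g P := hgmeas.aestronglyMeasurable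
    refine Integrable.mono hint1 hms
      (Filter.Eventually.of_forall fun ω => ?_)
    rcases hIval ω with h | h <;>
      norm_num [hg, hY, h, Real.norm_eq_abs, abs_mul]
  -- conditional expectation of g
  have hgcond : P[g | m] =ᵐ[P] fun ω => (2 * p - 1) * (σ ω * c) := by
    have hsplit : g = (fun ω => (2 : ℝ) • (I ω * Y ω)) - Y := by
      funext ω; simp [hg]; ring
    have h1 : P[g | m] =ᵐ[P] P[fun ω => (2 : ℝ) • (I ω * Y ω) | m] - P[Y | m] := by
      rw [hsplit]
      exact condExp_sub (hIYint.smul (2 : ℝ)) hint1 m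
    have h2 : P[fun ω => (2 : ℝ) • (I ω * Y ω) | m]
        =ᵐ[P] (2 : ℝ) • P[fun ω => I ω * Y ω | m] := condExp_smul (2 : ℝ) _ m
    refine h1.trans ?_
    filter_upwards [h2, hIYcond, hYcond] with ω e2 eIY eY
    simp only [Pi.sub_apply, Pi.smul_apply, smul_eq_mul] at *
    rw [e2, eIY, eY]; ring
  -- rewrite target function as D * g
  have hfun_eq : (fun ω' => D ω' * (2 * I ω' - 1) * σ ω' * |z ω'|)
      = fun ω => D ω * g ω := by
    funext ω; simp [hg, hY]; ring
  have hint2' : Integrable (fun ω => D ω * g ω) P := by rw [← hfun_eq]; exact hint2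
  have hDsm : StronglyMeasurable[m] D := hDmeas.stronglyMeasurable
  have hDg : P[fun ω => D ω * g ω | m] =ᵐ[P] D * P[g | m] :=
    condExp_mul_of_stronglyMeasurable_left hDsm hint2' hgint
  have hμ : P[fun ω' => D ω' * (2 * I ω' - 1) * σ ω' * |z ω'| | m]
      =ᵐ[P] fun ω => D ω * ((2 * p - 1) * (σ ω * c)) := by
    rw [hfun_eq]
    refine hDg.trans ?_
    filter_upwards [hgcond] with ω eg
    simp only [Pi.mul_apply, eg]
  -- integrate
  have hInt : ∫ ω, ((P[fun ω' => D ω' * (2 * I ω' - 1) * σ ω' * |z ω'| | m]) ω) ^ 2 ∂P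
      = ∫ ω, (2 * p - 1) ^ 2 * c ^ 2 * (σ ω) ^ 2 ∂P := by
    refine integral_congr_ae (hμ.mono fun ω h => ?_)
    have h' : (P[fun ω' => D ω' * (2 * I ω' - 1) * σ ω' * |z ω'| | m]) ω
        = D ω * ((2 * p - 1) * (σ ω * c)) := h
    dsimp only
    rw [h']
    rcases hDval ω with h1 | h1 <;> rw [h1] <;> ring
  rw [hInt, integral_const_mul]
end

section
/- (Quadratic link between out-of-sample R² and directional accuracy.) Let (Ω, F, P) be a probability space and G ⊆ F a sub-σ-algebra. Let D be a G-measurable random variable with values in {−1, 1}, σ a G-measurable nonnegative square-integrable random variable, z a random variable with |z| integrable and E[|z| | G] = E[|z|] almost surely, and I a random variable with values in {0, 1} such that E[I | G] = p almost surely for a constant p ∈ [1/2, 1] and such that I is conditionally independent of σ·|z| given G. Let the realized return be Y := D·(2I−1)·σ·|z|, assume Y is square-integrable with E[Y²] > 0 and σ·|z| integrable, and let μ := E[Y | G] be the MSE-optimal point forecast. Then the population out-of-sample R² satisfies 1 − E[(Y − μ)²] / E[Y²] = κ · (2p − 1)², where κ := (E[|z|])² · E[σ²] / E[Y²]. -/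
open MeasureTheory ProbabilityTheory Set
open scoped ENNReal

lemma condexp_mul_of_condIndep
    {Ω : Type*} (m : MeasurableSpace Ω) {mΩ : MeasurableSpace Ω}
    [StandardBorelSpace Ω] [Nonempty Ω]
    {P : Measure Ω} [IsProbabilityMeasure P] (hm : m ≤ mΩ)
    (I W : Ω → ℝ) (hImeas : Measurable I) (hIval : ∀ ω, I ω = 0 ∨ I ω = 1)
    (hWmeas : Measurable W) (hWint : Integrable W P)
    (hindep : CondIndepFun m hm I W P) :
    P[fun ω => I ω * W ω | m] =ᵐ[P] fun ω => (P[I|m]) ω * (P[W|m]) ω := by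
  set A : Set Ω := I ⁻¹' {1} with hA_def
  have hA : MeasurableSet A := hImeas (measurableSet_singleton 1)
  have hI1 : I = A.indicator (fun _ => (1:ℝ)) := by
    funext ω
    rcases hIval ω with h | h <;> simp [hA_def, Set.indicator_apply, h]
  have hIint : Integrable I P := by
    rw [hI1]; exact (integrable_const (1:ℝ)).indicator hA
  have hIWint : Integrable (fun ω => I ω * W ω) P := by
    refine Integrable.bdd_mul (c := 1) hWint hImeas.aestronglyMeasurable ?_
    refine Filter.Eventually.of_forall fun ω => ?_
    rcases hIval ω with h | h <;> simp [h]
  have hindep' : Kernel.IndepFun I W (condExpKernel P m) (P.trim hm) := hindep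
  have hind : ∀ q : ℚ, ∀ᵐ ω ∂P,
      condExpKernel P m ω (A ∩ W ⁻¹' Set.Ioi (q:ℝ)) = condExpKernel P m ω A * condExpKernel P m ω (W ⁻¹' Set.Ioi (q:ℝ)) := by
    intro q
    exact ae_of_ae_trim hm
      (Kernel.indepFun_iff_measure_inter_preimage_eq_mul.mp hindep' {1} (Set.Ioi (q:ℝ))
        (measurableSet_singleton 1) measurableSet_Ioi)
  have hAae : ∀ᵐ ω ∂P, ∀ q : ℚ,
      condExpKernel P m ω (A ∩ W ⁻¹' Set.Ioi (q:ℝ)) = condExpKernel P m ω A * condExpKernel P m ω (W ⁻¹' Set.Ioi (q:ℝ)) :=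
    ae_all_iff.mpr hind
  have hWint_ae : ∀ᵐ ω ∂P, Integrable W (condExpKernel P m ω) := hWint.condExpKernel_ae
  have key : ∀ᵐ ω ∂P, ∫ y, I y * W y ∂(condExpKernel P m ω)
      = (∫ y, I y ∂(condExpKernel P m ω)) * ∫ y, W y ∂(condExpKernel P m ω) := by
    filter_upwards [hAae, hWint_ae] with ω hω hWω
    have hmap : Measure.map W ((condExpKernel P m ω).restrict A) = (condExpKernel P m ω A) • Measure.map W (condExpKernel P m ω) := by
      refine MeasureTheory.ext_of_generate_finite _
        (BorelSpace.measurable_eq.trans Real.borel_eq_generateFrom_Ioi_rat) Real.isPiSystem_Ioi_rat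
        ?_ ?_
      · rintro s hs
        simp only [Set.mem_iUnion, Set.mem_singleton_iff] at hs
        obtain ⟨q, rfl⟩ := hs
        rw [Measure.map_apply hWmeas measurableSet_Ioi,
          Measure.restrict_apply (hWmeas measurableSet_Ioi), Measure.smul_apply,
          Measure.map_apply hWmeas measurableSet_Ioi, Set.inter_comm, hω q, smul_eq_mul]
      · rw [Measure.map_apply hWmeas MeasurableSet.univ, Set.preimage_univ,
          Measure.restrict_apply_univ, Measure.smul_apply,
          Measure.map_apply hWmeas MeasurableSet.univ, Set.preimage_univ,
          measure_univ, smul_eq_mul, mul_one]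
    have hIW : (fun y => I y * W y) = A.indicator W := by
      funext y
      rcases hIval y with h | h <;>
        simp [Set.indicator_apply, hA_def, h]
    have hIκ : ∫ y, I y ∂(condExpKernel P m ω) = (condExpKernel P m ω A).toReal := by
      rw [hI1]
      simpa [measureReal_def, Pi.one_def] using integral_indicator_one (μ := condExpKernel P m ω) hA
    rw [hIW, hIκ, integral_indicator hA]
    calc ∫ y in A, W y ∂(condExpKernel P m ω)
        = ∫ x, id x ∂(Measure.map W ((condExpKernel P m ω).restrict A)) := by
          rw [integral_map hWmeas.aemeasurable aestronglyMeasurable_id]; rfl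
      _ = ∫ x, id x ∂((condExpKernel P m ω A) • Measure.map W (condExpKernel P m ω)) := by rw [hmap]
      _ = (condExpKernel P m ω A).toReal * ∫ x, id x ∂(Measure.map W (condExpKernel P m ω)) := by
          rw [integral_smul_measure]; rfl
      _ = (condExpKernel P m ω A).toReal * ∫ y, W y ∂(condExpKernel P m ω) := by
          rw [integral_map hWmeas.aemeasurable aestronglyMeasurable_id]; rfl
  have h1 := condExp_ae_eq_integral_condExpKernel hm hIWint
  have h2 := condExp_ae_eq_integral_condExpKernel hm hIint
  have h3 := condExp_ae_eq_integral_condExpKernel hm hWint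
  filter_upwards [h1, h2, h3, key] with ω h1 h2 h3 hkey
  rw [h1, h2, h3, hkey]

/-- Quadratic link between out-of-sample R² and directional accuracy:
with realized return `Y = D·(2I-1)·σ·|z|` and MSE-optimal forecast `μ = E[Y | m]`,
the population out-of-sample R² satisfies
`1 - E[(Y - μ)²] / E[Y²] = κ · (2p - 1)²` where `κ = (E[|z|])² · E[σ²] / E[Y²]`. -/
theorem quadratic_link_R2_DA
    {Ω : Type*} (m : MeasurableSpace Ω) {mΩ : MeasurableSpace Ω} [StandardBorelSpace Ω] [Nonempty Ω]
    {P : Measure Ω} [IsProbabilityMeasure P]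
    (hm : m ≤ mΩ)
    (D σ z I : Ω → ℝ)
    (hDmeas : Measurable[m] D) (hDval : ∀ ω, D ω = -1 ∨ D ω = 1)
    (hσmeas : Measurable[m] σ) (hσnonneg : ∀ ω, 0 ≤ σ ω)
    (hσL2 : MemLp σ 2 P)
    (hzmeas : Measurable z)
    (hzint : Integrable (fun ω => |z ω|) P)
    (hzcond : P[fun ω => |z ω| | m] =ᵐ[P] fun _ => ∫ ω, |z ω| ∂P)
    (hImeas : Measurable I) (hIval : ∀ ω, I ω = 0 ∨ I ω = 1)
    (p : ℝ) (hp : p ∈ Set.Icc (1/2 : ℝ) 1)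
    (hpcond : P[I | m] =ᵐ[P] fun _ => p)
    (hindep : CondIndepFun m hm I (fun ω => σ ω * |z ω|) P)
    (hint1 : Integrable (fun ω => σ ω * |z ω|) P)
    (Y : Ω → ℝ) (hYdef : Y = fun ω => D ω * (2 * I ω - 1) * σ ω * |z ω|)
    (hYL2 : MemLp Y 2 P) (hYpos : 0 < ∫ ω, (Y ω) ^ 2 ∂P) :
    1 - (∫ ω, (Y ω - (P[Y | m]) ω) ^ 2 ∂P) / (∫ ω, (Y ω) ^ 2 ∂P)
      = ((∫ ω, |z ω| ∂P) ^ 2 * (∫ ω, (σ ω) ^ 2 ∂P) / (∫ ω, (Y ω) ^ 2 ∂P))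
          * (2 * p - 1) ^ 2 := by
  haveI : SigmaFinite (P.trim hm) := inferInstance
  set c : ℝ := ∫ ω, |z ω| ∂P with hc_def
  set W : Ω → ℝ := fun ω => σ ω * |z ω| with hW_def
  set g : Ω → ℝ := fun ω => (2 * p - 1) * c * (D ω * σ ω) with hg_def
  -- basic integrability facts
  have hIWint : Integrable (fun ω => I ω * W ω) P := by
    refine Integrable.bdd_mul (c := 1) hint1 hImeas.aestronglyMeasurable ?_
    exact Filter.Eventually.of_forall fun ω => by rcases hIval ω with h | h <;> simp [h]
  have hYint : Integrable Y P := hYL2.integrable one_le_two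
  -- Step 1: E[W | m] = σ ⬝ c
  have hcondW : P[W | m] =ᵐ[P] fun ω => σ ω * c := by
    have h := condExp_mul_of_stronglyMeasurable_left (μ := P) hσmeas.stronglyMeasurable hint1 hzint
    refine h.trans ?_
    filter_upwards [hzcond] with ω hω
    simp only [Pi.mul_apply, hω]
  -- Step 2: E[I⬝W | m] = p ⬝ σ ⬝ c
  have hcondIW : P[fun ω => I ω * W ω | m] =ᵐ[P] fun ω => p * (σ ω * c) := by
    have hWm : Measurable W := (hσmeas.mono hm le_rfl).mul hzmeas.abs
    have h := condexp_mul_of_condIndep (mΩ := mΩ) m hm I W hImeas hIval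
      hWm hint1 hindep
    refine h.trans ?_
    filter_upwards [hpcond, hcondW] with ω h1 h2
    rw [h1, h2]
  -- Step 3: E[Y | m] = g
  have hYV : Y = fun ω => D ω * (2 * (I ω * W ω) - W ω) := by
    rw [hYdef]; funext ω; simp only [hW_def]; ring
  have hVint : Integrable (fun ω => 2 * (I ω * W ω) - W ω) P :=
    (hIWint.const_mul 2).sub hint1
  have hcondY : P[Y | m] =ᵐ[P] g := by
    rw [hYV]
    have hDVint : Integrable (fun ω => D ω * (2 * (I ω * W ω) - W ω)) P := by
      rw [← hYV]; exact hYint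
    have h1 := condExp_mul_of_stronglyMeasurable_left (μ := P) hDmeas.stronglyMeasurable hDVint hVint
    refine h1.trans ?_
    have h2 := condExp_sub (μ := P) (m := m) (hIWint.const_mul 2) hint1
    have h3 := condExp_smul (μ := P) (m := m) (2 : ℝ) (fun ω => I ω * W ω)
    filter_upwards [h2, h3, hcondIW, hcondW] with ω h2 h3 h4 h5
    have h2' : (P[fun ω => 2 * (I ω * W ω) - W ω | m]) ω
        = (P[fun ω => 2 * (I ω * W ω) | m]) ω - (P[W | m]) ω := h2
    have h3' : (P[fun ω => 2 * (I ω * W ω) | m]) ω = 2 * (P[fun ω => I ω * W ω | m]) ω := h3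
    simp only [Pi.mul_apply]
    rw [h2', h3', h4, h5, hg_def]
    ring
  -- L² facts for g
  have hDσL2 : MemLp (fun ω => D ω * σ ω) 2 P := by
    have hDtop : MemLp D ⊤ P := by
      refine memLp_top_of_bound (hDmeas.mono hm le_rfl).aestronglyMeasurable 1 ?_
      exact ae_of_all _ fun ω => by rcases hDval ω with h | h <;> simp [h]
    exact hσL2.smul hDtop
  have hgL2 : MemLp g 2 P := by
    rw [hg_def]; exact hDσL2.const_mul _
  have hY2 : Integrable (fun ω => Y ω ^ 2) P := hYL2.integrable_sq
  have hg2 : Integrable (fun ω => g ω ^ 2) P := hgL2.integrable_sq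
  have hYg : Integrable (fun ω => Y ω * g ω) P := by
    have harith : (1 : ℝ≥0∞)/1 = 1/2 + 1/2 := by rw [div_one, ENNReal.add_halves]
    have h : MemLp (g • Y) 1 P := hYL2.smul hgL2
    have := memLp_one_iff_integrable.mp h
    refine this.congr ?_
    exact ae_of_all _ fun ω => by simp [mul_comm]
  -- ∫ Y g = ∫ g²
  have hYgeq : ∫ ω, Y ω * g ω ∂P = ∫ ω, g ω ^ 2 ∂P := by
    have hgsm : StronglyMeasurable[m] g := by
      rw [hg_def]; exact ((hDmeas.mul hσmeas).const_mul _).stronglyMeasurable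
    have hgYint : Integrable (g * Y) P := by
      refine hYg.congr (ae_of_all _ fun ω => by simp [mul_comm])
    have h4 := condExp_mul_of_stronglyMeasurable_left (μ := P) hgsm hgYint hYint
    calc ∫ ω, Y ω * g ω ∂P = ∫ ω, (g * Y) ω ∂P := by
          refine integral_congr_ae (ae_of_all _ fun ω => ?_); simp [mul_comm]
      _ = ∫ ω, (P[g * Y | m]) ω ∂P := (integral_condExp hm).symm
      _ = ∫ ω, g ω ^ 2 ∂P := by
          refine integral_congr_ae ?_
          filter_upwards [h4, hcondY] with ω h4 h5
          rw [h4]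
          simp only [Pi.mul_apply]
          rw [h5]; ring
  -- ∫ μ-residual² = ∫Y² - ∫g²
  have hres : ∫ ω, (Y ω - (P[Y | m]) ω) ^ 2 ∂P
      = ∫ ω, Y ω ^ 2 ∂P - ∫ ω, g ω ^ 2 ∂P := by
    have e1 : ∫ ω, (Y ω - (P[Y | m]) ω) ^ 2 ∂P = ∫ ω, (Y ω - g ω) ^ 2 ∂P := by
      refine integral_congr_ae ?_
      filter_upwards [hcondY] with ω h
      rw [h]
    have e2 : ∫ ω, (Y ω - g ω) ^ 2 ∂P
        = ∫ ω, (Y ω ^ 2 - 2 * (Y ω * g ω) + g ω ^ 2) ∂P :=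
      integral_congr_ae (ae_of_all _ fun ω => by ring)
    have hsub : Integrable (fun ω => Y ω ^ 2 - 2 * (Y ω * g ω)) P :=
      hY2.sub (hYg.const_mul 2)
    have i1 : ∫ ω, (Y ω ^ 2 - 2 * (Y ω * g ω) + g ω ^ 2) ∂P
        = ∫ ω, (Y ω ^ 2 - 2 * (Y ω * g ω)) ∂P + ∫ ω, g ω ^ 2 ∂P :=
      integral_add hsub hg2
    have i2 : ∫ ω, (Y ω ^ 2 - 2 * (Y ω * g ω)) ∂P
        = ∫ ω, Y ω ^ 2 ∂P - ∫ ω, 2 * (Y ω * g ω) ∂P :=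
      integral_sub hY2 (hYg.const_mul 2)
    have i3 : ∫ ω, 2 * (Y ω * g ω) ∂P = 2 * ∫ ω, Y ω * g ω ∂P :=
      integral_const_mul 2 _
    rw [e1, e2, i1, i2, i3, hYgeq]
    ring
  -- ∫ g² = (2p-1)² c² ∫ σ²
  have hGval : ∫ ω, g ω ^ 2 ∂P = (2 * p - 1) ^ 2 * c ^ 2 * ∫ ω, σ ω ^ 2 ∂P := by
    have e : ∀ ω, g ω ^ 2 = ((2 * p - 1) ^ 2 * c ^ 2) * σ ω ^ 2 := by
      intro ω
      rcases hDval ω with h | h <;> simp only [hg_def, h] <;> ring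
    calc ∫ ω, g ω ^ 2 ∂P = ∫ ω, ((2 * p - 1) ^ 2 * c ^ 2) * σ ω ^ 2 ∂P :=
          integral_congr_ae (ae_of_all _ e)
      _ = ((2 * p - 1) ^ 2 * c ^ 2) * ∫ ω, σ ω ^ 2 ∂P := integral_const_mul _ _
      _ = (2 * p - 1) ^ 2 * c ^ 2 * ∫ ω, σ ω ^ 2 ∂P := by ring
  rw [hres, hGval]
  have hT : (∫ ω, Y ω ^ 2 ∂P) ≠ 0 := ne_of_gt hYpos
  field_simp
  ring
end
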